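/- In ℚ[[q]], the coefficient of q^n in ∏_{j≥1} exp(t q^j) (as a polynomial in t) is ∑_{partitions of n} t^r / ∏_j k_j!, where the sum is over multiplicity sequences (k_j) with ∑ j·k_j = n and r = ∑ k_j. Equating this with the expansion of exp(tq/(1−q)) yields ∑_{∑k_i = r, ∑ i·k_i = n} r!/∏ k_i! = C(n−1, r−1). -/

import Mathlib

/-!
Fine's lemma: if `S_j(q) = ∑_k a_j(k) q^{jk}` with `a_j(0) = 1`, the coefficient of `qⁿ` in `∏_j S_j`
is `∑ ∏_j a_j(k_j)` over the partitions of `n`, `k_j` being the number of parts equal to `j`: a choice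
of exponents `d_j` with `∑ d_j = n` contributes only if every `j ∣ d_j`, and writing `d_j = j k_j`
these choices are exactly the partitions of `n`. Taking `a_j(k) = t^k / k!`, i.e. `S_j = exp(t q^j)`, gives the first identity.

For the second, the multinomial theorem writes `∑_{∑ k_j = r, ∑ j k_j = n} r! / ∏ k_j!` as the
coefficient of `qⁿ` in `(q + ⋯ + qⁿ)^r`. Up to degree `n` this agrees with
`(q / (1 - q))^r = q^r (1 - q)^{-r}`, whose coefficient of `qⁿ` is `C(n-1, r-1)`.
-/

open Finset

theorem finsum_subtype_eq_finset_sum {α M : Type*} [AddCommMonoid M] {p : α → Prop}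
    (T : Finset α) (h : ∀ a, p a ↔ a ∈ T) (f : α → M) :
    ∑ᶠ a : {a // p a}, f a = ∑ a ∈ T, f a := by
  have hT : {a | p a} = ↑T := Set.ext h
  rw [← finsum_mem_coe_finset, ← hT, ← finsum_set_coe_eq_finsum_mem]
  rfl

theorem finsum_subtype_toFinsupp_eq_sum {α M : Type*} [DecidableEq α] [AddCommMonoid M]
    {P : (α →₀ ℕ) → Prop} (S : Finset (Multiset α))
    (hS : ∀ m, m ∈ S ↔ P (Multiset.toFinsupp m)) (f : (α →₀ ℕ) → M) :
    ∑ᶠ k : {k // P k}, f k = ∑ m ∈ S, f (Multiset.toFinsupp m) := by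
  rw [finsum_subtype_eq_finset_sum (S.map Multiset.toFinsupp.toEquiv.toEmbedding), sum_map]
  · rfl
  intro k
  rw [mem_map_equiv, hS]
  simp

theorem Multiset.toFinsupp_sum_mul (m : Multiset ℕ) :
    (Multiset.toFinsupp m).sum (fun i v => i * v) = m.sum := by
  simp [Finsupp.sum, Multiset.toFinsupp_support, Multiset.toFinsupp_apply, sum_multiset_count m,
    mul_comm]

theorem Multiset.prod_map_pow_eq_pow_sum {M : Type*} [CommMonoid M] (a : M) (m : Multiset ℕ) :
    (m.map (a ^ ·)).prod = a ^ m.sum :=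
  Multiset.induction_on m (by simp) fun i m ih => by simp [ih, pow_add]

theorem Finset.exists_mem_sym_Icc_coe_eq_iff {n r : ℕ} {m : Multiset ℕ} :
    (∃ s ∈ (Icc 1 n).sym r, s.1.sum = n ∧ s.1 = m) ↔
      0 ∉ m ∧ Multiset.card m = r ∧ m.sum = n := by
  constructor
  · rintro ⟨s, hs, hsum, rfl⟩
    exact ⟨fun h0 => by simpa using mem_sym_iff.1 hs 0 h0, s.2, hsum⟩
  · rintro ⟨h0, hcard, hsum⟩
    refine ⟨⟨m, hcard⟩, mem_sym_iff.2 fun i hi => mem_Icc.2 ⟨?_, hsum ▸ Multiset.le_sum_of_mem hi⟩,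
      hsum, rfl⟩
    exact Nat.pos_of_ne_zero (ne_of_mem_of_not_mem hi h0)

theorem Finsupp.C_inv_prod_factorial_mul_X_pow_sum {α K : Type*} [Field K] (k : α →₀ ℕ) :
    Polynomial.C (((k.prod fun _ v => v.factorial : ℕ) : K))⁻¹ *
        Polynomial.X ^ (k.sum fun _ v => v) =
      k.prod fun _ v => Polynomial.C ((v.factorial : K))⁻¹ * Polynomial.X ^ v := by
  simp only [Finsupp.prod, Finsupp.sum, prod_mul_distrib, Nat.cast_prod, ← prod_inv_distrib,
    ← map_prod, prod_pow_eq_pow_sum]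

namespace Nat.Partition

theorem exists_parts_eq_iff {n : ℕ} {m : Multiset ℕ} :
    (∃ p : n.Partition, p.parts = m) ↔ 0 ∉ m ∧ m.sum = n := by
  constructor
  · rintro ⟨p, rfl⟩
    exact ⟨fun h => (p.parts_pos h).ne rfl, p.parts_sum⟩
  · rintro ⟨h0, hsum⟩
    exact ⟨⟨m, fun hi => Nat.pos_of_ne_zero (ne_of_mem_of_not_mem hi h0), hsum⟩, rfl⟩

theorem exists_toFinsuppAntidiag_eq {n : ℕ} {s : Finset ℕ} (hs0 : 0 ∉ s) {l : ℕ →₀ ℕ}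
    (hl : l ∈ s.finsuppAntidiag n) (hdvd : ∀ j ∈ s, j ∣ l j) :
    ∃ p : n.Partition, p.toFinsuppAntidiag = l := by
  obtain ⟨hsum, hsupp⟩ := mem_finsuppAntidiag.1 hl
  refine ⟨⟨∑ j ∈ s, Multiset.replicate (l j / j) j, fun {i} hi => ?_, ?_⟩, ?_⟩
  · obtain ⟨j, hj, hij⟩ := Multiset.mem_sum.1 hi
    rw [Multiset.eq_of_mem_replicate hij]
    exact Nat.pos_of_ne_zero (ne_of_mem_of_not_mem hj hs0)
  · rw [Multiset.sum_sum, ← hsum]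
    refine sum_congr rfl fun j hj => ?_
    rw [Multiset.sum_replicate, smul_eq_mul, Nat.div_mul_cancel (hdvd j hj)]
  · ext i
    show (∑ j ∈ s, Multiset.replicate (l j / j) j).count i * i = l i
    simp only [Multiset.count_sum', Multiset.count_replicate, sum_ite_eq']
    split_ifs with hi
    · exact Nat.div_mul_cancel (hdvd i hi)
    · rw [zero_mul, eq_comm, ← Finsupp.notMem_support_iff]
      exact fun h => hi (hsupp h)

variable {R : Type*} [CommSemiring R]

theorem prod_toFinsupp_parts_eq_prod_coeff (a : ℕ → ℕ → R) (ha : ∀ j, a j 0 = 1) {n : ℕ}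
    {s : Finset ℕ} (hs0 : 0 ∉ s) (hs : Icc 1 n ⊆ s) (p : n.Partition) :
    p.parts.toFinsupp.prod a = ∏ j ∈ s,
      if j ∣ p.toFinsuppAntidiag j then a j (p.toFinsuppAntidiag j / j) else 0 := by
  have hparts : p.parts.toFinset ⊆ s := fun i hi => by
    rw [Multiset.mem_toFinset] at hi
    exact hs (mem_Icc.2 ⟨p.parts_pos hi, p.le_of_mem_parts hi⟩)
  have hterm (j : ℕ) (hj : j ∈ s) :
      (if j ∣ p.toFinsuppAntidiag j then a j (p.toFinsuppAntidiag j / j) else 0) =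
        a j (p.parts.count j) := by
    show (if j ∣ p.parts.count j * j then a j (p.parts.count j * j / j) else 0) = _
    rw [if_pos (dvd_mul_left j _),
      Nat.mul_div_cancel _ (Nat.pos_of_ne_zero (ne_of_mem_of_not_mem hj hs0))]
  rw [Finsupp.prod, Multiset.toFinsupp_support, prod_congr rfl hterm]
  refine prod_subset_one_on_sdiff hparts (fun j hj => ?_) fun j _ => by
    rw [Multiset.toFinsupp_apply]
  rw [Multiset.count_eq_zero_of_notMem (by simpa using (mem_sdiff.1 hj).2), ha]

/-- Fine's lemma; the `j`-th factor is `∑_k a j k q^{jk}`. -/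
theorem coeff_prod_eq_coeff_genFun (a : ℕ → ℕ → R) (ha : ∀ j, a j 0 = 1) {n : ℕ}
    {s : Finset ℕ} (hs0 : 0 ∉ s) (hs : Icc 1 n ⊆ s) :
    PowerSeries.coeff n (∏ j ∈ s, PowerSeries.mk fun d => if j ∣ d then a j (d / j) else 0) =
      PowerSeries.coeff n (genFun a) := by
  rw [PowerSeries.coeff_prod, coeff_genFun]
  simp only [PowerSeries.coeff_mk]
  refine (sum_of_injOn toFinsuppAntidiag (toFinsuppAntidiag_injective n).injOn
    (fun p _ => finsuppAntidiag_mono hs n p.toFinsuppAntidiag_mem_finsuppAntidiag) ?_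
    fun p _ => prod_toFinsupp_parts_eq_prod_coeff a ha hs0 hs p).symm
  intro l hl hl_range
  obtain ⟨j, hj, hndvd⟩ : ∃ j ∈ s, ¬ j ∣ l j := by
    by_contra! hdvd
    obtain ⟨p, rfl⟩ := exists_toFinsuppAntidiag_eq hs0 hl hdvd
    exact hl_range ⟨p, mem_univ p, rfl⟩
  exact prod_eq_zero hj (if_neg hndvd)

end Nat.Partition

namespace PowerSeries

variable {R : Type*}

theorem coeff_sum_X_pow_pow [CommSemiring R] (s : Finset ℕ) (r n : ℕ) :
    coeff n ((∑ i ∈ s, X ^ i : R⟦X⟧) ^ r) =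
      ∑ m ∈ s.sym r with m.1.sum = n, (m.1.countPerms : R) := by
  rw [sum_pow, map_sum, sum_filter]
  refine sum_congr rfl fun m _ => ?_
  rw [Multiset.prod_map_pow_eq_pow_sum, ← map_natCast (C (R := R)), coeff_C_mul, coeff_X_pow,
    mul_ite, mul_one, mul_zero]
  simp only [eq_comm]

theorem trunc_pow_eq_of_trunc_eq [CommSemiring R] {f g : R⟦X⟧} {N : ℕ}
    (h : trunc N f = trunc N g) (r : ℕ) : trunc N (f ^ r) = trunc N (g ^ r) := by
  rw [← trunc_trunc_pow, h, trunc_trunc_pow]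

theorem coeff_pow_eq_of_coeff_eq [CommSemiring R] {f g : R⟦X⟧} {N : ℕ}
    (h : ∀ i ≤ N, coeff i f = coeff i g) (r : ℕ) {n : ℕ} (hn : n ≤ N) :
    coeff n (f ^ r) = coeff n (g ^ r) := by
  have htrunc : trunc (N + 1) f = trunc (N + 1) g := by
    ext i
    simp only [coeff_trunc, Nat.lt_succ_iff]
    split_ifs with hi
    · exact h i hi
    · rfl
  have := congrArg (Polynomial.coeff · n) (trunc_pow_eq_of_trunc_eq htrunc r)
  simpa [coeff_trunc, Nat.lt_succ_of_le hn] using this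

theorem coeff_sum_Icc_X_pow [Semiring R] {N i : ℕ} (hi : i ≤ N) :
    coeff i (∑ j ∈ Icc 1 N, X ^ j : R⟦X⟧) = coeff i (X * mk 1) := by
  rcases i with _ | i
  · simp
  · simp [coeff_X_pow, coeff_succ_X_mul, hi]

theorem coeff_X_mul_mk_one_pow [CommRing R] {n r : ℕ} (hn : 1 ≤ n) (hr : 1 ≤ r) :
    coeff n ((X * mk 1 : R⟦X⟧) ^ r) = (n - 1).choose (r - 1) := by
  obtain ⟨d, rfl⟩ := Nat.exists_eq_add_of_le' hr
  rw [mul_pow, mk_one_pow_eq_mk_choose_add, coeff_X_pow_mul', Nat.add_sub_cancel]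
  split_ifs with h
  · rw [coeff_mk, show d + (n - (d + 1)) = n - 1 by omega]
  · rw [Nat.choose_eq_zero_of_lt (by omega), Nat.cast_zero]

end PowerSeries

theorem sum_countPerms_sym_Icc_eq_choose {n r : ℕ} (hn : 1 ≤ n) (hr : 1 ≤ r) :
    ∑ m ∈ (Icc 1 n).sym r with m.1.sum = n, m.1.countPerms = (n - 1).choose (r - 1) := by
  have := (PowerSeries.coeff_sum_X_pow_pow (R := ℚ) (Icc 1 n) r n).symm.trans <|
    (PowerSeries.coeff_pow_eq_of_coeff_eq (fun _ hi => PowerSeries.coeff_sum_Icc_X_pow hi) r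
      le_rfl).trans (PowerSeries.coeff_X_mul_mk_one_pow hn hr)
  exact_mod_cast this

open Polynomial in
/-- Fine's proof of his identity: the coefficient of `qⁿ` in `∏_{j≥1} exp(t q^j)`
(a polynomial in `t`; the product is stabilized by any partial product over
`1 ≤ j ≤ N` with `N ≥ n`) is `∑_{partitions of n} t^r / ∏_j (k j)!` where
`r = ∑_j k j`; equating with the expansion of `exp(tq/(1-q))` yields Fine's Identity. -/
theorem fine_proof (n N : ℕ) (hN : n ≤ N) (r : ℕ) (hn : 1 ≤ n) (hr : 1 ≤ r) :
    (PowerSeries.coeff (R := Polynomial ℚ) n (∏ j ∈ Finset.Icc 1 N,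
        PowerSeries.mk fun d =>
          if j ∣ d then C (((d / j).factorial : ℚ))⁻¹ * X ^ (d / j) else 0) =
      ∑ᶠ k : {k : ℕ →₀ ℕ // k 0 = 0 ∧ (k.sum fun i v => i * v) = n},
        C ((((k : ℕ →₀ ℕ).prod fun _ v => v.factorial : ℕ) : ℚ))⁻¹ *
          X ^ ((k : ℕ →₀ ℕ).sum fun _ v => v)) ∧
    ∑ᶠ k : {k : ℕ →₀ ℕ //
        k 0 = 0 ∧ (k.sum fun _ v => v) = r ∧ (k.sum fun i v => i * v) = n},
      Nat.multinomial (k : ℕ →₀ ℕ).support (k : ℕ →₀ ℕ) = (n - 1).choose (r - 1) := by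
  refine ⟨?_, ?_⟩
  · rw [Nat.Partition.coeff_prod_eq_coeff_genFun (fun _ v => C ((v.factorial : ℚ))⁻¹ * X ^ v)
        (by simp) (by simp) (Icc_subset_Icc_right hN), Nat.Partition.coeff_genFun,
      finsum_subtype_toFinsupp_eq_sum (univ.map ⟨_, fun _ _ => Nat.Partition.ext⟩) ?_
        fun k => C (((k.prod fun _ v => v.factorial : ℕ) : ℚ))⁻¹ * X ^ (k.sum fun _ v => v),
      sum_map]
    · simp only [Finsupp.C_inv_prod_factorial_mul_X_pow_sum]
      rfl
    · intro m
      simp only [mem_map, mem_univ, true_and, Multiset.toFinsupp_apply, Multiset.count_eq_zero,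
        Multiset.toFinsupp_sum_mul]
      exact Nat.Partition.exists_parts_eq_iff
  · rw [finsum_subtype_toFinsupp_eq_sum
        ((((Icc 1 n).sym r).filter (·.1.sum = n)).map ⟨_, Sym.coe_injective⟩) ?_
        fun k => Nat.multinomial k.support k, sum_map]
    · exact sum_countPerms_sym_Icc_eq_choose hn hr
    · intro m
      rw [show ((Multiset.toFinsupp m).sum fun _ v => v) = Multiset.card m from
        Multiset.toFinsupp_sum_eq m]
      simp only [mem_map, mem_filter, and_assoc, Multiset.toFinsupp_apply, Multiset.count_eq_zero,
        Multiset.toFinsupp_sum_mul]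
      exact exists_mem_sym_Icc_coe_eq_iff
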